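/- For any prime p ≥ 3, in the group G = ⟨s, t | t^{p²} = s^p = 1, s⁻¹ t s = t^{p+1}⟩ with T = ⟨t^p⟩, for every g ∉ T the coset gT equals the conjugacy class of g. -/

import Mathlib

open scoped Pointwise

/-- Relations for the presentation `⟨s, t | t^(p²) = s^p = 1, s⁻¹ t s = t^(p+1)⟩`,
with `s = of 0` and `t = of 1`. -/
def heisRels (p : ℕ) : Set (FreeGroup (Fin 2)) :=
  {FreeGroup.of 1 ^ (p ^ 2), FreeGroup.of 0 ^ p,
    (FreeGroup.of 0)⁻¹ * FreeGroup.of 1 * FreeGroup.of 0 * (FreeGroup.of 1 ^ (p + 1))⁻¹}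

/-
The element `t ^ p` is central, and `s`, `t` commute modulo it, so `G ⧸ T` is abelian and every
conjugate of `g` lies in `g T`. Conversely, write `g = t ^ a * s ^ b`: conjugation by `t` (when
`p ∤ b`) or by `s⁻¹` (when `p ∣ b`, hence `s ^ b = 1` and `p ∤ a` as `g ∉ T`) multiplies `g` by
`(t ^ p) ^ c` with `p ∤ c`. As `(t ^ p) ^ p = 1`, such a power generates `T`, so iterating this
conjugation reaches every element of `g T`.
-/

open Subgroup

section General

variable {G : Type*} [Group G]

theorem commute_of_closure_eq_top {k : Set G} (hk : closure k = ⊤)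
    (hcomm : ∀ x ∈ k, ∀ y ∈ k, Commute x y) (x y : G) : Commute x y :=
  have hmem (g : G) : g ∈ Set.centralizer (Set.centralizer k) :=
    closure_le_centralizer_centralizer k (hk ▸ mem_top g)
  Set.centralizer_centralizer_comm_of_comm hcomm x (hmem x) y (hmem y)

theorem inv_mul_mem_of_isConj {N : Subgroup G} [N.Normal]
    (hcomm : ∀ a b : G ⧸ N, Commute a b) {g y : G} (h : IsConj g y) : g⁻¹ * y ∈ N := by
  obtain ⟨u, rfl⟩ := isConj_iff.mp h
  rw [← QuotientGroup.eq, QuotientGroup.mk_mul, QuotientGroup.mk_mul, (hcomm _ _).eq,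
    QuotientGroup.mk_inv, inv_mul_cancel_left]

theorem normal_zpowers_of_mem_center {z : G} (hz : z ∈ center G) : (zpowers z).Normal :=
  ⟨fun n hn g => by
    rw [(mem_center_iff.mp (zpowers_le_of_mem hz hn) g), mul_inv_cancel_right]
    exact hn⟩

theorem conj_zpow_mul_eq_mul_zpow {x g w : G} (hxw : Commute x w) (h : x * g * x⁻¹ = g * w)
    (n : ℤ) : x ^ n * g * (x ^ n)⁻¹ = g * w ^ n := by
  have hx : g⁻¹ * x * g⁻¹⁻¹ = w * x := by
    have hxg : x * g = g * w * x := by rw [← h]; group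
    rw [inv_inv, mul_assoc, hxg]; group
  have := conj_zpow (a := g⁻¹) (b := x) (i := n)
  rw [hx, hxw.symm.mul_zpow, inv_inv] at this
  calc x ^ n * g * (x ^ n)⁻¹ = g * (g⁻¹ * x ^ n * g) * (x ^ n)⁻¹ := by group
    _ = g * w ^ n := by rw [← this]; group

theorem zpowers_le_zpowers_zpow {p : ℕ} (hp : p.Prime) {z : G} (hz : z ^ p = 1) {c : ℤ}
    (hc : ¬ (p : ℤ) ∣ c) : zpowers z ≤ zpowers (z ^ c) := by
  refine zpowers_le_of_mem (mem_zpowers_zpow_iff.mpr ?_)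
  have hcp : Nat.Coprime c.natAbs p :=
    ((Nat.Prime.coprime_iff_not_dvd hp).mpr (by rwa [← Int.ofNat_dvd_left])).symm
  exact hcp.coprime_dvd_right (orderOf_dvd_of_pow_eq_one hz)

end General

namespace ModularPGroup

variable {p : ℕ}

abbrev G (p : ℕ) := PresentedGroup (heisRels p)
abbrev s : G p := PresentedGroup.of 0
abbrev t : G p := PresentedGroup.of 1

theorem t_pow_sq : (t : G p) ^ (p ^ 2) = 1 :=
  map_pow (PresentedGroup.mk _) _ _ ▸ PresentedGroup.one_of_mem (by simp [heisRels])

theorem s_pow : (s : G p) ^ p = 1 :=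
  map_pow (PresentedGroup.mk _) _ _ ▸ PresentedGroup.one_of_mem (by simp [heisRels])

theorem inv_s_mul_t_mul_s : (s : G p)⁻¹ * t * s = t ^ (p + 1) := by
  have h := PresentedGroup.one_of_mem (rels := heisRels p) (Set.mem_insert_of_mem _
    (Set.mem_insert_of_mem _ (Set.mem_singleton _)))
  simp only [map_mul, map_inv, map_pow] at h
  exact mul_inv_eq_one.mp h

theorem zpow_t_add_sq_mul (a k : ℤ) : (t : G p) ^ (a + (p : ℤ) ^ 2 * k) = t ^ a := by
  rw [zpow_add, zpow_mul, ← Nat.cast_pow, zpow_natCast, t_pow_sq, one_zpow, mul_one]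

theorem inv_s_mul_zpow_t_mul_s (a : ℤ) : (s : G p)⁻¹ * t ^ a * s = t ^ ((p + 1 : ℤ) * a) := by
  have h := conj_zpow (a := (s : G p)⁻¹) (b := t) (i := a)
  rw [inv_inv] at h
  rw [← h, inv_s_mul_t_mul_s, ← zpow_natCast, ← zpow_mul]
  push_cast; rfl

theorem s_mul_zpow_t_mul_inv_s (a : ℤ) : (s : G p) * t ^ a * s⁻¹ = t ^ ((1 - p : ℤ) * a) := by
  have h : (s : G p)⁻¹ * t ^ (1 - p : ℤ) * s = t := by
    rw [inv_s_mul_zpow_t_mul_s]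
    calc (t : G p) ^ ((p + 1 : ℤ) * (1 - p)) = t ^ (1 + (p : ℤ) ^ 2 * (-1)) := by ring_nf
      _ = t := by rw [zpow_t_add_sq_mul, zpow_one]
  have h' : (s : G p) * t * s⁻¹ = t ^ (1 - p : ℤ) :=
    calc (s : G p) * t * s⁻¹ = s * (s⁻¹ * t ^ (1 - p : ℤ) * s) * s⁻¹ := by rw [h]
      _ = t ^ (1 - p : ℤ) := by group
  rw [← conj_zpow, h', ← zpow_mul]

theorem commute_s_t_pow : Commute (s : G p) (t ^ p) := by
  have h : (s : G p)⁻¹ * t ^ (p : ℤ) * s = t ^ (p : ℤ) := by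
    rw [inv_s_mul_zpow_t_mul_s]
    calc (t : G p) ^ ((p + 1 : ℤ) * p) = t ^ ((p : ℤ) + p ^ 2 * 1) := by ring_nf
      _ = t ^ (p : ℤ) := zpow_t_add_sq_mul _ _
  rw [← zpow_natCast]
  calc (s : G p) * t ^ (p : ℤ) = s * (s⁻¹ * t ^ (p : ℤ) * s) := by rw [h]
    _ = t ^ (p : ℤ) * s := by group

theorem t_pow_mem_center : (t : G p) ^ p ∈ center (G p) := by
  rw [center_eq_iInf (PresentedGroup.closure_range_of _)]
  simp only [mem_iInf, Set.forall_mem_range, mem_centralizer_singleton_iff]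
  intro i
  fin_cases i
  · exact commute_s_t_pow.eq.symm
  · exact ((Commute.refl _).pow_right p).eq.symm

theorem commute_t_pow (x : G p) : Commute x (t ^ p) :=
  mem_center_iff.mp t_pow_mem_center x

instance : (zpowers ((t : G p) ^ p)).Normal :=
  normal_zpowers_of_mem_center t_pow_mem_center

theorem t_mul_s : (t : G p) * s = s * t * t ^ p := by
  rw [mul_assoc, ← pow_succ', ← inv_s_mul_t_mul_s]
  group

theorem t_mul_s_mul_inv_t : (t : G p) * s * t⁻¹ = s * t ^ p := by
  rw [t_mul_s]; group

theorem exists_eq_zpow_t_mul_zpow_s (g : G p) : ∃ a b : ℤ, g = t ^ a * s ^ b := by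
  have hg : g ∈ closure (Set.range PresentedGroup.of) := by
    rw [PresentedGroup.closure_range_of]; exact mem_top g
  induction hg using closure_induction_left with
  | one => exact ⟨0, 0, by simp⟩
  | mul_left x hx y _ ih =>
    obtain ⟨i, rfl⟩ := hx
    obtain ⟨a, b, rfl⟩ := ih
    fin_cases i <;> simp only [Fin.zero_eta, Fin.mk_one]
    · refine ⟨(1 - p) * a, 1 + b, ?_⟩
      rw [← s_mul_zpow_t_mul_inv_s]; group
    · exact ⟨1 + a, b, by group⟩
  | inv_mul_cancel x hx y _ ih =>
    obtain ⟨i, rfl⟩ := hx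
    obtain ⟨a, b, rfl⟩ := ih
    fin_cases i <;> simp only [Fin.zero_eta, Fin.mk_one]
    · refine ⟨(p + 1) * a, -1 + b, ?_⟩
      rw [← inv_s_mul_zpow_t_mul_s]; group
    · exact ⟨-1 + a, b, by group⟩

theorem exists_conj_eq_mul_zpow {g : G p} (hg : g ∉ zpowers ((t : G p) ^ p)) :
    ∃ (x : G p) (c : ℤ), ¬ (p : ℤ) ∣ c ∧ x * g * x⁻¹ = g * (t ^ p) ^ c := by
  obtain ⟨a, b, rfl⟩ := exists_eq_zpow_t_mul_zpow_s g
  by_cases hb : (p : ℤ) ∣ b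
  · obtain ⟨m, rfl⟩ := hb
    rw [zpow_mul, zpow_natCast, s_pow, one_zpow, mul_one] at hg ⊢
    refine ⟨s⁻¹, a, ?_, ?_⟩
    · rintro ⟨l, rfl⟩
      exact hg ⟨l, by rw [← zpow_natCast, zpow_mul]⟩
    · rw [inv_inv, inv_s_mul_zpow_t_mul_s, ← zpow_natCast, ← zpow_mul, ← zpow_add]
      ring_nf
  · refine ⟨t, b, hb, ?_⟩
    calc (t : G p) * (t ^ a * s ^ b) * t⁻¹ = t ^ a * (t * s * t⁻¹) ^ b := by
          rw [conj_zpow]; group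
      _ = t ^ a * s ^ b * (t ^ p) ^ b := by
          rw [t_mul_s_mul_inv_t, commute_s_t_pow.mul_zpow, mul_assoc]

theorem commute_quotient_zpowers_t_pow (a b : G p ⧸ zpowers ((t : G p) ^ p)) : Commute a b := by
  have hmk : Commute ((s : G p) : G p ⧸ zpowers ((t : G p) ^ p)) (t : G p) := by
    rw [Commute, SemiconjBy, ← QuotientGroup.mk_mul, ← QuotientGroup.mk_mul, QuotientGroup.eq,
      t_mul_s, inv_mul_cancel_left]
    exact mem_zpowers _
  refine commute_of_closure_eq_top (k := QuotientGroup.mk' _ '' Set.range PresentedGroup.of) ?_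
    ?_ a b
  · rw [← MonoidHom.map_closure (QuotientGroup.mk' _), PresentedGroup.closure_range_of,
      ← MonoidHom.range_eq_map, MonoidHom.range_eq_top]
    exact QuotientGroup.mk'_surjective _
  · rintro _ ⟨_, ⟨i, rfl⟩, rfl⟩ _ ⟨_, ⟨j, rfl⟩, rfl⟩
    fin_cases i <;> fin_cases j
    · exact Commute.refl _
    · exact hmk
    · exact hmk.symm
    · exact Commute.refl _

end ModularPGroup

open ModularPGroup

theorem coset_eq_conjClass_modular_general {p : ℕ} (hp : p.Prime) :
    letI G := PresentedGroup (heisRels p)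
    letI t : G := PresentedGroup.of 1
    ∀ g : G, g ∉ Subgroup.zpowers (t ^ p) →
      g • ((Subgroup.zpowers (t ^ p) : Subgroup G) : Set G) = {y | IsConj g y} := by
  intro g hg
  ext y
  rw [Set.mem_smul_set_iff_inv_smul_mem, smul_eq_mul, SetLike.mem_coe, Set.mem_ofPred_eq]
  refine ⟨fun hy => ?_, inv_mul_mem_of_isConj commute_quotient_zpowers_t_pow⟩
  obtain ⟨x, c, hc, hx⟩ := exists_conj_eq_mul_zpow hg
  obtain ⟨n, hn⟩ := mem_zpowers_iff.mp
    (zpowers_le_zpowers_zpow hp (by rw [← pow_mul, ← sq, t_pow_sq]) hc hy)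
  refine isConj_iff.mpr ⟨x ^ n, ?_⟩
  rw [conj_zpow_mul_eq_mul_zpow ((commute_t_pow x).zpow_right c) hx, hn,
    mul_inv_cancel_left]

/-- For a prime `p ≥ 3`, in `G = ⟨s, t | t^(p²) = s^p = 1, s⁻¹ t s = t^(p+1)⟩` with
`T = ⟨t^p⟩`, for every `g ∉ T` the coset `gT` equals the conjugacy class of `g`. -/
theorem coset_eq_conjClass_modular {p : ℕ} (hp : p.Prime) (hp3 : 3 ≤ p) :
    letI G := PresentedGroup (heisRels p)
    letI t : G := PresentedGroup.of 1
    ∀ g : G, g ∉ Subgroup.zpowers (t ^ p) →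
      g • ((Subgroup.zpowers (t ^ p) : Subgroup G) : Set G) = {y | IsConj g y} :=
  coset_eq_conjClass_modular_general hp
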